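/- arXiv:2506.12924 — 2 statements merged into one kernel-verified Lean document; each statement's English description precedes it below -/
import Mathlib

section
/- For fixed q, b, t, k with q ≥ 2, if x, y ∈ Σ_q^n satisfy d_b(x,y) ≥ 2k−1, then |Ball_{t,b}(x) ∩ Ball_{t,b}(y)| = O(n^{t−k}). -/
open scoped BigOperators

/-- The cyclic interval of length `L` starting at position `i` in `ZMod n`. -/
def cycInt (n : ℕ) (i : ZMod n) (L : ℕ) : Set (ZMod n) :=
  {j | ∃ k : ℕ, k < L ∧ j = i + (k : ZMod n)}

/-- `e` is a burst supported in the cyclic interval starting at `i` of length `L ≤ b`. -/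
def BurstAt {G : Type*} [AddCommGroup G] {n : ℕ} (b : ℕ) (e : ZMod n → G)
    (i : ZMod n) (L : ℕ) : Prop :=
  L ≤ b ∧ ∀ j : ZMod n, e j ≠ 0 → j ∈ cycInt n i L

/-- `e` is a `b≤`-burst: its support lies in a cyclic interval of length at most `b`. -/
def IsBurst {G : Type*} [AddCommGroup G] {n : ℕ} (b : ℕ) (e : ZMod n → G) : Prop :=
  ∃ i L, BurstAt b e i L

/-- `w` is a sum of exactly `t` many `b≤`-bursts. -/
def SumOfBursts {G : Type*} [AddCommGroup G] {n : ℕ} (b t : ℕ) (w : ZMod n → G) : Prop :=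
  ∃ l : List (ZMod n → G), l.length = t ∧ (∀ e ∈ l, IsBurst b e) ∧ l.sum = w

/-- The cyclic burst distance: minimum number of `b≤`-bursts summing to `x - y`. -/
noncomputable def burstDist {G : Type*} [AddCommGroup G] {n : ℕ} (b : ℕ)
    (x y : ZMod n → G) : ℕ :=
  sInf {t | SumOfBursts b t (x - y)}

/-- `w` is a sum of exactly `t` pairwise disjoint `b≤`-bursts (disjoint covering intervals). -/
def SumOfDisjointBursts {G : Type*} [AddCommGroup G] {n : ℕ} (b t : ℕ)
    (w : ZMod n → G) : Prop :=
  ∃ (es : Fin t → ZMod n → G) (ps : Fin t → ZMod n) (Ls : Fin t → ℕ),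
    (∀ m, BurstAt b (es m) (ps m) (Ls m)) ∧
    (∀ m m' : Fin t, m ≠ m' → cycInt n (ps m) (Ls m) ∩ cycInt n (ps m') (Ls m') = ∅) ∧
    ∑ m, es m = w

/-- `B_{≤t,≤b}`: vectors expressible as a sum of at most `t` pairwise disjoint `b≤`-bursts. -/
def BSet (n b t : ℕ) (G : Type*) [AddCommGroup G] : Set (ZMod n → G) :=
  {w | ∃ i ≤ t, SumOfDisjointBursts b i w}

/-- The radius-`t` burst ball around `x`. -/
def burstBall {G : Type*} [AddCommGroup G] {n : ℕ} (b t : ℕ) (x : ZMod n → G) :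
    Set (ZMod n → G) :=
  {y | burstDist b x y ≤ t}

/-- A `(t,b)`-burst-correcting code: radius-`t` burst balls around distinct codewords
are disjoint. -/
def IsBurstCorrecting {G : Type*} [AddCommGroup G] {n : ℕ} (t b : ℕ)
    (C : Set (ZMod n → G)) : Prop :=
  ∀ u ∈ C, ∀ v ∈ C, u ≠ v → burstBall b t u ∩ burstBall b t v = ∅

/-!
Take `z` in both balls, so `z - x` and `z - y` are sums of at most `t` bursts each. Restricted to
`S = supp (x - y)`, the bursts of the two decompositions that meet `S` sum to `x - y`; hence at
least `2k - 1` of them meet `S`, and one decomposition, say that of `z - x`, has at least `k`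
such bursts. These all live in a neighbourhood of `S` of size `O(|S|)`, and `|S| ≤ 2tb` since
`x - y = (z - y) - (z - x)`. So `z - x` is a function supported on a set of bounded size plus a
sum of at most `t - k` bursts, and there are only `O(n ^ (t - k))` of those.
-/

open Function Set
open scoped Pointwise

lemma cycInt_eq_coe_image (n : ℕ) (i : ZMod n) (L : ℕ) :
    cycInt n i L = ((Finset.range L).image fun k : ℕ => i + (k : ZMod n) : Finset (ZMod n)) := by
  ext j
  simp [cycInt, eq_comm]

lemma ncard_cycInt_le (n : ℕ) (i : ZMod n) (L : ℕ) : (cycInt n i L).ncard ≤ L := by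
  rw [cycInt_eq_coe_image, Set.ncard_coe_finset]
  exact Finset.card_image_le.trans (Finset.card_range L).le

lemma ncard_add_le {M : Type*} [Add M] [IsCancelAdd M] (s t : Set M) :
    (s + t).ncard ≤ s.ncard * t.ncard :=
  Set.natCard_add_le

lemma ncard_sub_le {M : Type*} [AddGroup M] (s t : Set M) :
    (s - t).ncard ≤ s.ncard * t.ncard :=
  Set.natCard_sub_le

lemma ncard_setOf_support_subset_le {α M : Type*} [Zero M] [Finite M] (T : Set α) [Finite T] :
    {f : α → M | support f ⊆ T}.ncard ≤ Nat.card M ^ T.ncard := by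
  rw [← Nat.card_coe_set_eq, ← Nat.card_coe_set_eq T, ← Nat.card_fun]
  refine Nat.card_le_card_of_injective (fun f j => f.1 j) fun f g hfg =>
    Subtype.ext <| funext fun j => ?_
  by_cases hj : j ∈ T
  · exact congrFun hfg ⟨j, hj⟩
  · rw [notMem_support.1 fun h => hj (f.2 h), notMem_support.1 fun h => hj (g.2 h)]

section Bursts

variable {G : Type*} [AddCommGroup G] {n b : ℕ}

lemma IsBurst.mono {e e' : ZMod n → G} (h : IsBurst b e) (hsub : support e' ⊆ support e) :
    IsBurst b e' := by
  obtain ⟨i, L, hL, hs⟩ := h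
  exact ⟨i, L, hL, fun j hj => hs j (hsub hj)⟩

lemma isBurst_zero : IsBurst b (0 : ZMod n → G) :=
  ⟨0, 0, Nat.zero_le b, fun _ hj => absurd rfl hj⟩

lemma IsBurst.neg {e : ZMod n → G} (h : IsBurst b e) : IsBurst b (-e) :=
  h.mono (support_neg e).le

lemma IsBurst.indicator {e : ZMod n → G} (h : IsBurst b e) (S : Set (ZMod n)) :
    IsBurst b (S.indicator e) :=
  h.mono (support_indicator.subset.trans inter_subset_right)

lemma IsBurst.support_subset {e : ZMod n → G} (h : IsBurst b e) :
    ∃ i, support e ⊆ cycInt n i b := by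
  obtain ⟨i, L, hL, hs⟩ := h
  exact ⟨i, fun j hj => let ⟨k, hk, hj⟩ := hs j hj; ⟨k, hk.trans_le hL, hj⟩⟩

lemma IsBurst.ncard_support_le {e : ZMod n → G} (h : IsBurst b e) : (support e).ncard ≤ b := by
  obtain ⟨i, hi⟩ := h.support_subset
  refine (Set.ncard_le_ncard hi ?_).trans (ncard_cycInt_le n i b)
  rw [cycInt_eq_coe_image]
  exact Finset.finite_toSet _

lemma IsBurst.sub_mem {e : ZMod n → G} (h : IsBurst b e) {p j : ZMod n} (hp : e p ≠ 0)
    (hj : e j ≠ 0) : j - p ∈ cycInt n 0 b - cycInt n 0 b := by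
  obtain ⟨i, hi⟩ := h.support_subset
  obtain ⟨c₁, hc₁, rfl⟩ := hi hp
  obtain ⟨c₂, hc₂, rfl⟩ := hi hj
  exact ⟨c₂, ⟨c₂, hc₂, by simp⟩, c₁, ⟨c₁, hc₁, by simp⟩, by ring⟩

lemma isBurst_single (hb : 1 ≤ b) (j : ZMod n) (a : G) : IsBurst b (Pi.single j a) :=
  ⟨j, 1, hb, fun p hp => ⟨0, one_pos, by simpa using Pi.support_single_subset hp⟩⟩

def burstOfPattern (b : ℕ) (i : ZMod n) (v : Fin b → G) : ZMod n → G :=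
  fun j => if h : (j - i).val < b then v ⟨(j - i).val, h⟩ else 0

lemma IsBurst.exists_eq_burstOfPattern [NeZero n] (hbn : b ≤ n) {e : ZMod n → G}
    (h : IsBurst b e) : ∃ i v, burstOfPattern b i v = e := by
  obtain ⟨i, hi⟩ := h.support_subset
  refine ⟨i, fun c => e (i + (c.1 : ZMod n)), funext fun j => ?_⟩
  unfold burstOfPattern
  split_ifs with hj
  · simp
  · by_contra hne
    obtain ⟨c, hc, rfl⟩ := hi (Ne.symm hne)
    rw [add_sub_cancel_left, ZMod.val_natCast_of_lt (hc.trans_le hbn)] at hj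
    exact hj hc

lemma ncard_setOf_isBurst_le [Finite G] [NeZero n] (hbn : b ≤ n) :
    {e : ZMod n → G | IsBurst b e}.ncard ≤ n * Nat.card G ^ b := by
  have hsub : {e : ZMod n → G | IsBurst b e} ⊆
      range fun iv : ZMod n × (Fin b → G) => burstOfPattern b iv.1 iv.2 := fun e he =>
    let ⟨i, v, hiv⟩ := he.exists_eq_burstOfPattern hbn; ⟨(i, v), hiv⟩
  refine (Set.ncard_le_ncard hsub (Set.toFinite _)).trans ?_
  rw [← Set.image_univ]
  refine (Set.ncard_image_le (Set.toFinite _)).trans ?_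
  rw [Set.ncard_univ, Nat.card_prod, Nat.card_zmod, Nat.card_fun, Nat.card_fin]

end Bursts

section SumOfBursts

variable {G : Type*} [AddCommGroup G] {n b : ℕ}

lemma IsBurst.sumOfBursts_one {e : ZMod n → G} (h : IsBurst b e) : SumOfBursts b 1 e :=
  ⟨[e], rfl, by simpa using h, by simp⟩

lemma sumOfBursts_zero (r : ℕ) : SumOfBursts b r (0 : ZMod n → G) :=
  ⟨List.replicate r 0, by simp, fun e he => List.eq_of_mem_replicate he ▸ isBurst_zero, by simp⟩

lemma SumOfBursts.add {s r : ℕ} {v w : ZMod n → G} (hv : SumOfBursts b s v)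
    (hw : SumOfBursts b r w) : SumOfBursts b (s + r) (v + w) := by
  obtain ⟨l, rfl, hl, rfl⟩ := hv
  obtain ⟨l', rfl, hl', rfl⟩ := hw
  exact ⟨l ++ l', List.length_append, by simpa [or_imp, forall_and] using ⟨hl, hl'⟩,
    List.sum_append⟩

lemma SumOfBursts.neg {s : ℕ} {w : ZMod n → G} (h : SumOfBursts b s w) :
    SumOfBursts b s (-w) := by
  obtain ⟨l, rfl, hl, rfl⟩ := h
  refine ⟨l.map (-·), List.length_map _, fun e he => ?_, (List.sum_neg l).symm⟩
  obtain ⟨e', he', rfl⟩ := List.mem_map.1 he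
  exact (hl e' he').neg

lemma SumOfBursts.sub {s r : ℕ} {v w : ZMod n → G} (hv : SumOfBursts b s v)
    (hw : SumOfBursts b r w) : SumOfBursts b (s + r) (v - w) := by
  simpa only [sub_eq_add_neg] using hv.add hw.neg

lemma SumOfBursts.mono {s m : ℕ} {w : ZMod n → G} (h : SumOfBursts b s w) (hsm : s ≤ m) :
    SumOfBursts b m w := by
  simpa [Nat.add_sub_cancel' hsm] using
    h.add (sumOfBursts_zero (m - s) : SumOfBursts b (m - s) (0 : ZMod n → G))

lemma SumOfBursts.mem_add {m : ℕ} {w : ZMod n → G} (h : SumOfBursts b (m + 1) w) :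
    w ∈ {e : ZMod n → G | IsBurst b e} + {w | SumOfBursts b m w} := by
  obtain ⟨_ | ⟨e, l⟩, hlen, hl, rfl⟩ := h
  · simp at hlen
  · simp only [List.mem_cons, forall_eq_or_imp] at hl
    exact add_mem_add hl.1 ⟨l, by simpa using hlen, hl.2, rfl⟩

lemma SumOfBursts.ncard_support_le [NeZero n] {s : ℕ} {w : ZMod n → G}
    (h : SumOfBursts b s w) : (support w).ncard ≤ s * b := by
  induction s generalizing w with
  | zero =>
    obtain ⟨l, hlen, -, rfl⟩ := h
    simp [List.length_eq_zero_iff.1 hlen]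
  | succ m ih =>
    obtain ⟨e, he, v, hv, rfl⟩ := SumOfBursts.mem_add h
    calc (support (e + v)).ncard ≤ (support e ∪ support v).ncard :=
          Set.ncard_le_ncard (support_add e v) (Set.toFinite _)
      _ ≤ b + m * b := (Set.ncard_union_le _ _).trans (add_le_add he.ncard_support_le (ih hv))
      _ = (m + 1) * b := by ring

lemma ncard_setOf_sumOfBursts_le [Finite G] [NeZero n] (hbn : b ≤ n) (m : ℕ) :
    {w : ZMod n → G | SumOfBursts b m w}.ncard ≤ (n * Nat.card G ^ b) ^ m := by
  induction m with
  | zero =>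
    have : {w : ZMod n → G | SumOfBursts b 0 w} ⊆ {0} := by
      rintro w ⟨l, hlen, -, rfl⟩
      simp [List.length_eq_zero_iff.1 hlen]
    simpa using Set.ncard_le_ncard this
  | succ m ih =>
    calc _ ≤ ({e : ZMod n → G | IsBurst b e} + {w | SumOfBursts b m w}).ncard :=
          Set.ncard_le_ncard (fun w hw => SumOfBursts.mem_add hw) (Set.toFinite _)
      _ ≤ (n * Nat.card G ^ b) * (n * Nat.card G ^ b) ^ m :=
          (ncard_add_le _ _).trans (Nat.mul_le_mul (ncard_setOf_isBurst_le hbn) ih)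
      _ = (n * Nat.card G ^ b) ^ (m + 1) := by ring

lemma sumOfBursts_burstDist [NeZero n] (hb : 1 ≤ b) (x y : ZMod n → G) :
    SumOfBursts b (burstDist b x y) (x - y) := by
  classical
  have hne : {s | SumOfBursts b s (x - y)}.Nonempty :=
    ⟨_, Finset.univ.toList.map fun j => Pi.single j ((x - y) j), rfl,
      by simpa using fun j => isBurst_single hb j ((x - y) j),
      by rw [Finset.sum_map_toList, Finset.univ_sum_single]⟩
  exact Nat.sInf_mem hne

end SumOfBursts

section Decomposition

variable {G : Type*} [AddCommGroup G] {n b : ℕ}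

def burstNbhd (b : ℕ) (S : Set (ZMod n)) : Set (ZMod n) :=
  S + (cycInt n 0 b - cycInt n 0 b)

lemma ncard_burstNbhd_le (S : Set (ZMod n)) : (burstNbhd b S).ncard ≤ S.ncard * (b * b) :=
  (ncard_add_le _ _).trans <| Nat.mul_le_mul_left _ <| (ncard_sub_le _ _).trans <|
    Nat.mul_le_mul (ncard_cycInt_le n 0 b) (ncard_cycInt_le n 0 b)

lemma IsBurst.support_subset_burstNbhd {e : ZMod n → G} (h : IsBurst b e) {S : Set (ZMod n)}
    {p : ZMod n} (hp : p ∈ S) (hep : e p ≠ 0) : support e ⊆ burstNbhd b S :=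
  fun j hj => ⟨p, hp, j - p, h.sub_mem hep hj, add_sub_cancel p j⟩

lemma sumOfBursts_indicator_list_sum {S : Set (ZMod n)} {l : List (ZMod n → G)}
    (P : (ZMod n → G) → Prop) [DecidablePred P] (hl : ∀ e ∈ l, IsBurst b e)
    (hP : ∀ e ∈ l, ¬ P e → S.indicator e = 0) :
    SumOfBursts b (l.countP fun e => P e) (S.indicator l.sum) := by
  induction l with
  | nil => simpa using sumOfBursts_zero (b := b) (G := G) (n := n) 0
  | cons e l ih =>
    simp only [List.mem_cons, forall_eq_or_imp] at hl hP
    rw [List.sum_cons, Set.indicator_add', List.countP_cons]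
    by_cases he : P e
    · simpa [he, add_comm] using (hl.1.indicator S).sumOfBursts_one.add (ih hl.2 hP.2)
    · simpa [he, hP.1 he] using ih hl.2 hP.2

lemma list_sum_mem_add {T : Set (ZMod n)} {l : List (ZMod n → G)}
    (P : (ZMod n → G) → Prop) [DecidablePred P] (hl : ∀ e ∈ l, IsBurst b e)
    (hP : ∀ e ∈ l, P e → support e ⊆ T) :
    l.sum ∈ {f : ZMod n → G | support f ⊆ T} +
      {w | SumOfBursts b (l.length - l.countP fun e => P e) w} := by
  induction l with
  | nil => exact ⟨0, by simp, 0, sumOfBursts_zero 0, by simp⟩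
  | cons e l ih =>
    simp only [List.mem_cons, forall_eq_or_imp] at hl hP
    obtain ⟨f, hf, w, hw, hfw⟩ := Set.mem_add.1 (ih hl.2 hP.2)
    have hcount := List.countP_le_length (p := fun e => decide (P e)) (l := l)
    rw [List.sum_cons, ← hfw, List.countP_cons, List.length_cons]
    by_cases he : P e
    · refine Set.mem_add.2 ⟨e + f, (support_add e f).trans (union_subset (hP.1 he) hf), w, ?_,
        by abel⟩
      simpa [he] using hw
    · refine Set.mem_add.2 ⟨f, hf, e + w, ?_, by abel⟩
      show SumOfBursts b _ (e + w)
      convert hl.1.sumOfBursts_one.add hw using 1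
      simp only [he, decide_false, Bool.false_eq_true, if_false]
      omega

end Decomposition

section Intersection

variable {G : Type*} [AddCommGroup G] {n b : ℕ}

lemma list_sum_mem_add_of_le_countP {T : Set (ZMod n)} {l : List (ZMod n → G)} {t k : ℕ}
    (P : (ZMod n → G) → Prop) [DecidablePred P] (hl : ∀ e ∈ l, IsBurst b e)
    (hP : ∀ e ∈ l, P e → support e ⊆ T) (hlen : l.length ≤ t) (hk : k ≤ l.countP fun e => P e) :
    l.sum ∈ {f : ZMod n → G | support f ⊆ T} + {w | SumOfBursts b (t - k) w} :=
  Set.add_subset_add subset_rfl (fun _ hw => SumOfBursts.mono hw (by omega))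
    (list_sum_mem_add P hl hP)

theorem burstBall_inter_subset [NeZero n] (hb : 1 ≤ b) {t k : ℕ} {x y : ZMod n → G}
    (hxy : 2 * k - 1 ≤ burstDist b x y) :
    burstBall b t x ∩ burstBall b t y ⊆ {x, y} +
      ({f | support f ⊆ burstNbhd b (support (x - y))} + {w | SumOfBursts b (t - k) w}) := by
  classical
  rintro z ⟨hzx, hzy⟩
  set S := support (x - y)
  let P : (ZMod n → G) → Prop := fun e => ∃ p ∈ S, e p ≠ 0
  obtain ⟨l₁, hlen₁, hl₁, hsum₁⟩ := (sumOfBursts_burstDist hb x z).neg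
  obtain ⟨l₂, hlen₂, hl₂, hsum₂⟩ := (sumOfBursts_burstDist hb y z).neg
  rw [neg_sub] at hsum₁ hsum₂
  have hout : ∀ e : ZMod n → G, ¬ P e → S.indicator e = 0 := fun e he =>
    Set.indicator_eq_zero'.2 <| Set.disjoint_left.2 fun p hp hpS => he ⟨p, hpS, hp⟩
  have hin : ∀ l : List (ZMod n → G), (∀ e ∈ l, IsBurst b e) →
      ∀ e ∈ l, P e → support e ⊆ burstNbhd b S := fun l hl e he ⟨p, hpS, hp⟩ =>
    (hl e he).support_subset_burstNbhd hpS hp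
  -- Restricted to `S`, the two decompositions of `z - y` and `z - x` decompose `x - y`.
  have hproj := (sumOfBursts_indicator_list_sum P hl₂ fun e _ => hout e).sub
    (sumOfBursts_indicator_list_sum P hl₁ fun e _ => hout e)
  rw [hsum₁, hsum₂, ← Set.indicator_sub', sub_sub_sub_cancel_left, Set.indicator_support] at hproj
  have hcount := hxy.trans (Nat.sInf_le hproj)
  rcases le_or_gt k (l₁.countP fun e => P e) with h₁ | h₁
  · exact Set.mem_add.2 ⟨x, by simp, l₁.sum,
      list_sum_mem_add_of_le_countP P hl₁ (hin l₁ hl₁) (hlen₁ ▸ hzx) h₁, by rw [hsum₁]; abel⟩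
  · exact Set.mem_add.2 ⟨y, by simp, l₂.sum,
      list_sum_mem_add_of_le_countP P hl₂ (hin l₂ hl₂) (hlen₂ ▸ hzy) (by omega),
      by rw [hsum₂]; abel⟩

theorem ncard_burstBall_inter_le [Finite G] [NeZero n] (hb : 1 ≤ b) (hbn : b ≤ n) {t k : ℕ}
    {x y : ZMod n → G} (hxy : 2 * k - 1 ≤ burstDist b x y) :
    (burstBall b t x ∩ burstBall b t y).ncard ≤
      2 * Nat.card G ^ (2 * t * b * (b * b)) * (n * Nat.card G ^ b) ^ (t - k) := by
  rcases (burstBall b t x ∩ burstBall b t y).eq_empty_or_nonempty with hI | ⟨z, hzx, hzy⟩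
  · simp [hI]
  have hS : (support (x - y)).ncard ≤ 2 * t * b := by
    have h := (sumOfBursts_burstDist hb x z).sub (sumOfBursts_burstDist hb y z)
    rw [sub_sub_sub_cancel_right] at h
    refine h.ncard_support_le.trans (Nat.mul_le_mul_right b ?_)
    have h₁ : burstDist b x z ≤ t := hzx
    have h₂ : burstDist b y z ≤ t := hzy
    omega
  have hT := (ncard_burstNbhd_le (b := b) (support (x - y))).trans (Nat.mul_le_mul_right _ hS)
  calc _ ≤ ({x, y} + ({f : ZMod n → G | support f ⊆ burstNbhd b (support (x - y))} +
          {w | SumOfBursts b (t - k) w})).ncard :=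
        Set.ncard_le_ncard (burstBall_inter_subset hb hxy) (Set.toFinite _)
    _ ≤ 2 * (Nat.card G ^ (burstNbhd b (support (x - y))).ncard *
          (n * Nat.card G ^ b) ^ (t - k)) :=
        (ncard_add_le _ _).trans <| Nat.mul_le_mul ((Set.ncard_insert_le _ _).trans (by simp)) <|
          (ncard_add_le _ _).trans <| Nat.mul_le_mul (ncard_setOf_support_subset_le _)
            (ncard_setOf_sumOfBursts_le hbn _)
    _ ≤ 2 * (Nat.card G ^ (2 * t * b * (b * b)) * (n * Nat.card G ^ b) ^ (t - k)) := by
        gcongr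
        exact Nat.card_pos
    _ = _ := by ring

end Intersection

theorem ball_intersection_bound_general {G : Type*} [AddCommGroup G] [Fintype G]
    (t b k : ℕ) (hb : 1 ≤ b)
    (hk : 1 ≤ k) (hkt : k ≤ t) :
    ∃ c : ℝ, 0 < c ∧ ∀ n : ℕ, 2 * b * t ≤ n → ∀ x y : ZMod n → G,
      2 * k - 1 ≤ burstDist b x y →
      ((burstBall b t x ∩ burstBall b t y).ncard : ℝ) ≤ c * (n : ℝ) ^ (t - k) := by
  have hG : 0 < Nat.card G := Nat.card_pos
  refine ⟨2 * Nat.card G ^ (2 * t * b * (b * b)) * (Nat.card G ^ b) ^ (t - k), by positivity, ?_⟩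
  intro n hn x y hxy
  have ht : 1 ≤ t := hk.trans hkt
  have hbn : b ≤ n := by nlinarith
  have : NeZero n := ⟨by omega⟩
  calc ((burstBall b t x ∩ burstBall b t y).ncard : ℝ)
      ≤ ((2 * Nat.card G ^ (2 * t * b * (b * b)) * (n * Nat.card G ^ b) ^ (t - k) : ℕ) : ℝ) :=
        Nat.cast_le.2 (ncard_burstBall_inter_le hb hbn hxy)
    _ = _ := by push_cast; ring

/-- for fixed q, b, t, k, if d_b(x,y) ≥ 2k−1 then
|Ball_{t,b}(x) ∩ Ball_{t,b}(y)| = O(n^{t−k}). -/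
theorem ball_intersection_bound {G : Type*} [AddCommGroup G] [Fintype G]
    (q t b k : ℕ) (hq : Fintype.card G = q) (hq2 : 2 ≤ q) (hb : 1 ≤ b)
    (hk : 1 ≤ k) (hkt : k ≤ t) :
    ∃ c : ℝ, 0 < c ∧ ∀ n : ℕ, 2 * b * t ≤ n → ∀ x y : ZMod n → G,
      2 * k - 1 ≤ burstDist b x y →
      ((burstBall b t x ∩ burstBall b t y).ncard : ℝ) ≤ c * (n : ℝ) ^ (t - k) :=
  ball_intersection_bound_general t b k hb hk hkt
end

section
/- The shifting operation does not increase burst diameter: if A ⊆ Σ_q^n has burst diameter at most D (i.e., d_b(x,y) ≤ D for all x, y ∈ A), then for any coordinate i ∈ [n] and symbol a ∈ Σ_q, the shifted set S_{i,a}(A) also has burst diameter at most D, and |S_{i,a}(A)| = |A|. -/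
open scoped BigOperators

/-- The shifting operation S_{i,a}: replace the i-th entry of x by 0 when it equals a and
the resulting vector is not already in A; otherwise leave x unchanged. -/
noncomputable def shiftOp {G : Type*} [AddCommGroup G] {n : ℕ} (A : Set (ZMod n → G))
    (i : ZMod n) (a : G) (x : ZMod n → G) : ZMod n → G := by
  classical
  exact if x i = a ∧ Function.update x i 0 ∉ A then Function.update x i 0 else x

section Aux
variable {G : Type*} [AddCommGroup G] {n b : ℕ}

lemma list_sum_apply (l : List (ZMod n → G)) (j : ZMod n) :
    l.sum j = (l.map (fun e => e j)).sum := by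
  induction l with
  | nil => rfl
  | cons h t ih => simp [List.sum_cons, Pi.add_apply, ih]

lemma exists_mem_ne_zero {l : List (ZMod n → G)} {j : ZMod n} (h : l.sum j ≠ 0) :
    ∃ e ∈ l, e j ≠ 0 := by
  by_contra hc
  push_neg at hc
  apply h
  rw [list_sum_apply]
  apply List.sum_eq_zero
  intro x hx
  rcases List.mem_map.1 hx with ⟨e, he, rfl⟩
  exact hc e he

lemma single_burstAt (hb : 1 ≤ b) (j : ZMod n) (c : G) :
    BurstAt b (Pi.single j c) j 1 := by
  refine ⟨hb, fun k hk => ?_⟩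
  classical
  rcases eq_or_ne k j with rfl | hne
  · exact ⟨0, by simp⟩
  · simp [Pi.single_eq_of_ne hne] at hk

lemma sumOfBursts_exists (hn : 1 ≤ n) (hb : 1 ≤ b) (w : ZMod n → G) :
    ∃ t, SumOfBursts b t w := by
  haveI : NeZero n := ⟨by omega⟩
  classical
  refine ⟨Fintype.card (ZMod n),
    Finset.univ.toList.map (fun j => Pi.single j (w j)), by simp, ?_, ?_⟩
  · intro e he
    rcases List.mem_map.1 he with ⟨j, _, rfl⟩
    exact ⟨j, 1, single_burstAt hb j (w j)⟩
  · rw [Finset.sum_map_toList]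
    exact Finset.univ_sum_single w

lemma update_eq_add_single (w : ZMod n → G) (i : ZMod n) (c : G) [DecidableEq (ZMod n)] :
    Function.update w i c = w + Pi.single i (c - w i) := by
  funext j
  rcases eq_or_ne j i with rfl | hne
  · simp
  · simp [Function.update_apply, hne, Pi.single_eq_of_ne hne]

lemma update_sumOfBursts {t : ℕ} {w : ZMod n → G} {i : ZMod n}
    (hw : w i ≠ 0) (h : SumOfBursts b t w) (c : G) :
    SumOfBursts b t (Function.update w i c) := by
  classical
  obtain ⟨l, hlen, hburst, hsum⟩ := h
  have : l.sum i ≠ 0 := by rw [hsum]; exact hw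
  obtain ⟨e, he, hei⟩ := exists_mem_ne_zero this
  obtain ⟨l₁, l₂, rfl⟩ := List.append_of_mem he
  obtain ⟨p, L, hLb, hcov⟩ := hburst e he
  refine ⟨l₁ ++ (e + Pi.single i (c - w i)) :: l₂, by simpa using hlen, ?_, ?_⟩
  · intro f hf
    rcases List.mem_append.1 hf with hf | hf
    · exact hburst f (List.mem_append.2 (Or.inl hf))
    · rcases List.mem_cons.1 hf with rfl | hf
      · refine ⟨p, L, hLb, fun j hj => ?_⟩
        rcases eq_or_ne j i with rfl | hne
        · exact hcov j hei
        · apply hcov j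
          intro h0
          apply hj
          simp [Pi.add_apply, h0, Pi.single_eq_of_ne hne]
      · exact hburst f (List.mem_append.2 (Or.inr (List.mem_cons_of_mem _ hf)))
  · rw [update_eq_add_single w i c, ← hsum]
    simp [List.sum_append, List.sum_cons]
    abel

lemma list_sum_neg (l : List (ZMod n → G)) :
    (l.map (fun e => -e)).sum = -l.sum := by
  induction l with
  | nil => simp
  | cons h t ih => simp only [List.map_cons, List.sum_cons, ih]; abel

lemma neg_sumOfBursts {t : ℕ} {w : ZMod n → G} (h : SumOfBursts b t w) :
    SumOfBursts b t (-w) := by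
  obtain ⟨l, hlen, hburst, hsum⟩ := h
  refine ⟨l.map (fun e => -e), by simpa using hlen, ?_, ?_⟩
  · intro f hf
    rcases List.mem_map.1 hf with ⟨e, he, rfl⟩
    obtain ⟨p, L, hLb, hcov⟩ := hburst e he
    exact ⟨p, L, hLb, fun j hj => hcov j (by simpa using hj)⟩
  · rw [← hsum, list_sum_neg]

lemma burstDist_comm (x y : ZMod n → G) : burstDist b x y = burstDist b y x := by
  unfold burstDist
  congr 1
  ext t
  constructor
  · intro h
    have := neg_sumOfBursts h
    simpa using this
  · intro h
    have := neg_sumOfBursts h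
    simpa using this

lemma key_lemma (hn : 1 ≤ n) (hb : 1 ≤ b) {x y x' y' : ZMod n → G} {i : ZMod n} {c : G}
    (hdiff : x' - y' = Function.update (x - y) i c) (hne : (x - y) i ≠ 0) :
    burstDist b x' y' ≤ burstDist b x y := by
  classical
  have hne' : {t | SumOfBursts b t (x - y)}.Nonempty := sumOfBursts_exists hn hb _
  have hmem : burstDist b x y ∈ {t | SumOfBursts b t (x - y)} := Nat.sInf_mem hne'
  have : SumOfBursts b (burstDist b x y) (x' - y') := by
    rw [hdiff]; exact update_sumOfBursts hne hmem c
  exact Nat.sInf_le this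

end Aux

section Aux2
variable {G : Type*} [AddCommGroup G] {n b D : ℕ}

lemma shift_helper (hn : 1 ≤ n) (hb : 1 ≤ b)
    (A : Set (ZMod n → G)) (hdiam : ∀ x ∈ A, ∀ y ∈ A, burstDist b x y ≤ D)
    (i : ZMod n) (a : G) {x y : ZMod n → G} (hx : x ∈ A) (hy : y ∈ A)
    (hPx : x i = a ∧ Function.update x i 0 ∉ A)
    (hPy : ¬(y i = a ∧ Function.update y i 0 ∉ A)) :
    burstDist b (Function.update x i 0) y ≤ D := by
  classical
  have ha : a ≠ 0 := by
    rintro rfl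
    exact hPx.2 (by rwa [← hPx.1, Function.update_eq_self])
  by_cases hyi : y i = a
  · have hy' : Function.update y i 0 ∈ A := by
      by_contra h; exact hPy ⟨hyi, h⟩
    have hdf : Function.update x i 0 - y
        = Function.update (x - Function.update y i 0) i (0 - y i) := by
      funext j
      rcases eq_or_ne j i with rfl | hne
      · simp
      · simp [Function.update_apply, hne]
    have hne0 : (x - Function.update y i 0) i ≠ 0 := by
      simp [Pi.sub_apply, hPx.1, ha]
    exact le_trans (key_lemma hn hb hdf hne0) (hdiam x hx _ hy')
  · have hdf : Function.update x i 0 - y = Function.update (x - y) i (0 - y i) := by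
      funext j
      rcases eq_or_ne j i with rfl | hne
      · simp
      · simp [Function.update_apply, hne]
    have hne0 : (x - y) i ≠ 0 := by
      have : x i ≠ y i := by rw [hPx.1]; exact fun h => hyi h.symm
      simpa [Pi.sub_apply, sub_ne_zero] using this
    exact le_trans (key_lemma hn hb hdf hne0) (hdiam x hx y hy)

end Aux2


/-- shifting does not increase the burst diameter, and preserves the size
of the set. -/
theorem shift_preserves_diameter_and_card {G : Type*} [AddCommGroup G] [Fintype G]
    (q n b D : ℕ) (hq : Fintype.card G = q) (hq2 : 2 ≤ q) (hb : 1 ≤ b) (hn : 1 ≤ n)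
    (A : Set (ZMod n → G))
    (hdiam : ∀ x ∈ A, ∀ y ∈ A, burstDist b x y ≤ D)
    (i : ZMod n) (a : G) :
    (∀ x ∈ A, ∀ y ∈ A, burstDist b (shiftOp A i a x) (shiftOp A i a y) ≤ D) ∧
    ((shiftOp A i a) '' A).ncard = A.ncard := by
  classical
  constructor
  · intro x hx y hy
    simp only [shiftOp]
    by_cases hPx : x i = a ∧ Function.update x i 0 ∉ A <;>
      by_cases hPy : y i = a ∧ Function.update y i 0 ∉ A
    · rw [if_pos hPx, if_pos hPy]
      have hdf : Function.update x i 0 - Function.update y i 0 = x - y := by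
        funext j
        rcases eq_or_ne j i with rfl | hne
        · simp [hPx.1, hPy.1]
        · simp [Function.update_apply, hne]
      calc burstDist b (Function.update x i 0) (Function.update y i 0)
          = burstDist b x y := by unfold burstDist; rw [hdf]
        _ ≤ D := hdiam x hx y hy
    · rw [if_pos hPx, if_neg hPy]
      exact shift_helper hn hb A hdiam i a hx hy hPx hPy
    · rw [if_neg hPx, if_pos hPy]
      rw [burstDist_comm]
      exact shift_helper hn hb A hdiam i a hy hx hPy hPx
    · rw [if_neg hPx, if_neg hPy]
      exact hdiam x hx y hy
  · apply Set.ncard_image_of_injOn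
    intro x hx y hy hxy
    simp only [shiftOp] at hxy
    by_cases hPx : x i = a ∧ Function.update x i 0 ∉ A <;>
      by_cases hPy : y i = a ∧ Function.update y i 0 ∉ A
    · rw [if_pos hPx, if_pos hPy] at hxy
      funext j
      rcases eq_or_ne j i with rfl | hne
      · rw [hPx.1, hPy.1]
      · have := congrFun hxy j
        simpa [Function.update_apply, hne] using this
    · rw [if_pos hPx, if_neg hPy] at hxy
      exact absurd (by rw [hxy]; exact hy) hPx.2
    · rw [if_neg hPx, if_pos hPy] at hxy
      exact absurd (hxy ▸ hx) hPy.2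
    · rwa [if_neg hPx, if_neg hPy] at hxy
end
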